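/- Every finite group of exponent p (p prime) has property Ŝ: every representation of every subgroup over an algebraically closed field of characteristic 0 has submultiplicative spectrum. -/

import Mathlib

/-!
Induct on the dimension. If `ρ` takes only scalar values the claim is immediate. Otherwise the
image of the `p`-group `H` modulo scalars has a nontrivial centre, which gives `x` with `ρ x`
non-scalar and `ρ x * ρ g = c_g • (ρ g * ρ x)` for every `g`. If `c_a ≠ 1`, conjugating by `ρ x`
shows `σ(ρ a) = c_a • σ(ρ a)`, so `σ(ρ a)` contains every `p`-th root of unity and each eigenvalue
`μ` of `ρ (a * b)` factors as `(μ / β) * β` with `β ∈ σ(ρ b)`; symmetrically if `c_b ≠ 1`. If both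
`ρ a` and `ρ b` commute with `ρ x`, a common eigenvector of `ρ (a * b)` and `ρ x` lies in a proper
eigenspace of `ρ x`, on which the centralizer of `ρ x` acts, and induction applies.
-/

open Pointwise

/-- A finite group `G` has property Ŝ (over `F`) if for every subgroup `K ≤ G` and every
finite-dimensional representation `ρ : K → GL_n(F)`, the matrix group `ρ(K)` has
submultiplicative spectrum: `σ(ρ(a)ρ(b)) ⊆ σ(ρ(a))·σ(ρ(b))` for all `a, b ∈ K`. -/
def PropertyShat (F : Type*) [Field F] (G : Type*) [Group G] : Prop :=
  ∀ (K : Subgroup G) (n : ℕ) (ρ : K →* GL (Fin n) F) (a b : K),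
    spectrum F ((ρ (a * b) : GL (Fin n) F) : Matrix (Fin n) (Fin n) F) ⊆
      spectrum F ((ρ a : GL (Fin n) F) : Matrix (Fin n) (Fin n) F) *
        spectrum F ((ρ b : GL (Fin n) F) : Matrix (Fin n) (Fin n) F)

open Module Module.End

section Spectrum

variable {F A : Type*} [Field F] [Ring A] [Algebra F A] [Nontrivial A] {p : ℕ}

lemma spectrum.pow_eq_one_of_pow_eq_one {a : A} (ha : a ^ p = 1) {μ : F}
    (hμ : μ ∈ spectrum F a) : μ ^ p = 1 := by
  simpa [ha, spectrum.one_eq] using spectrum.pow_mem_pow a p hμ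

lemma spectrum.setOf_pow_eq_one_subset_of_conj_eq_smul (hp : p.Prime) {a : A} (ha : a ^ p = 1)
    (hne : (spectrum F a).Nonempty) {u : Aˣ} {c : F} (hc : c ≠ 1)
    (hconj : u * a * u⁻¹ = c • a) : {ω : F | ω ^ p = 1} ⊆ spectrum F a := by
  have : Fact p.Prime := ⟨hp⟩
  have hsmul : ∀ μ ∈ spectrum F a, c * μ ∈ spectrum F a := fun μ hμ => by
    rw [← spectrum.units_conjugate (u := u), hconj, spectrum.smul_eq_smul c a hne]
    exact Set.smul_mem_smul_set hμ
  obtain ⟨μ, hμ⟩ := hne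
  have hμp := spectrum.pow_eq_one_of_pow_eq_one ha hμ
  have hμ0 : μ ≠ 0 := by rintro rfl; simp [hp.ne_zero] at hμp
  have hcp : c ^ p = 1 := by
    simpa [mul_pow, hμp] using spectrum.pow_eq_one_of_pow_eq_one ha (hsmul μ hμ)
  have hprim : IsPrimitiveRoot c p := IsPrimitiveRoot.iff_orderOf.mpr (orderOf_eq_prime hcp hc)
  have hpow : ∀ i : ℕ, c ^ i * μ ∈ spectrum F a := by
    intro i
    induction i with
    | zero => simpa using hμ
    | succ i ih => simpa [pow_succ', mul_assoc] using hsmul _ ih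
  intro ω hω
  obtain ⟨i, -, hi⟩ := hprim.eq_pow_of_pow_eq_one (ξ := ω / μ) (by rw [div_pow, hω, hμp, div_one])
  simpa [hi, hμ0] using hpow i

end Spectrum

lemma Set.setOf_pow_eq_one_subset_mul {F : Type*} [Field F] {p : ℕ} {s t : Set F}
    (hs : {ω : F | ω ^ p = 1} ⊆ s) (ht : t.Nonempty) (htp : t ⊆ {β : F | β ^ p = 1}) (hp : p ≠ 0) :
    {ω : F | ω ^ p = 1} ⊆ s * t := by
  intro ω hω
  obtain ⟨β, hβ⟩ := ht
  have hβp : β ^ p = 1 := htp hβ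
  have hβ0 : β ≠ 0 := by rintro rfl; simp [hp] at hβp
  refine Set.mem_mul.mpr ⟨ω / β, hs ?_, β, hβ, div_mul_cancel₀ ω hβ0⟩
  show (ω / β) ^ p = 1
  rw [div_pow, show ω ^ p = 1 from hω, hβp, div_one]

lemma Module.End.spectrum_restrict_subset {F V : Type*} [Field F] [AddCommGroup V] [Module F V]
    [FiniteDimensional F V] (f : End F V) {W : Submodule F V} (hfW : ∀ w ∈ W, f w ∈ W) :
    spectrum F (f.restrict hfW) ⊆ spectrum F f := by
  intro μ hμ
  rw [← hasEigenvalue_iff_mem_spectrum] at hμ ⊢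
  obtain ⟨w, hw⟩ := hμ.exists_hasEigenvector
  exact hasEigenvalue_of_hasEigenvector
    ⟨eigenspace_restrict_le_eigenspace f hfW μ ⟨w, hw.1, rfl⟩, by simpa using hw.2⟩

lemma IsPGroup.exists_notMem_forall_commutator_mem {p : ℕ} [Fact p.Prime] {H : Type*} [Group H]
    [Finite H] (hH : IsPGroup p H) {S : Subgroup H} [S.Normal] (hS : S ≠ ⊤) :
    ∃ x ∉ S, ∀ g : H, x * g * x⁻¹ * g⁻¹ ∈ S := by
  have : Nontrivial (H ⧸ S) := QuotientGroup.nontrivial_iff.mpr hS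
  have := (hH.to_quotient S).center_nontrivial
  obtain ⟨⟨z, hz⟩, hz1⟩ := exists_ne (1 : Subgroup.center (H ⧸ S))
  obtain ⟨x, rfl⟩ := QuotientGroup.mk_surjective z
  refine ⟨x, fun hx => hz1 (Subtype.ext ((QuotientGroup.eq_one_iff x).mpr hx)), fun g => ?_⟩
  rw [← QuotientGroup.eq_one_iff]
  simp only [QuotientGroup.mk_mul, QuotientGroup.mk_inv,
    (Subgroup.mem_center_iff.mp hz (g : H ⧸ S)).symm]
  group

lemma Module.End.HasEigenvalue.exists_hasEigenvector_of_commute {F V : Type*} [Field F]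
    [IsAlgClosed F] [AddCommGroup V] [Module F V] [FiniteDimensional F V] {f g : End F V}
    (hfg : Commute f g) {μ : F} (hμ : g.HasEigenvalue μ) :
    ∃ ν w, g.HasEigenvector μ w ∧ f.HasEigenvector ν w := by
  have hfW : ∀ w ∈ g.eigenspace μ, f w ∈ g.eigenspace μ :=
    fun w hw => mapsTo_genEigenspace_of_comm hfg.symm μ 1 hw
  have : Nontrivial (g.eigenspace μ) := Submodule.nontrivial_iff_ne_bot.mpr hμ
  obtain ⟨ν, hν⟩ := exists_eigenvalue (f.restrict hfW)
  obtain ⟨w, hw⟩ := hν.exists_hasEigenvector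
  have hw0 : (w : V) ≠ 0 := by simpa using hw.2
  exact ⟨ν, w, ⟨w.2, hw0⟩,
    ⟨eigenspace_restrict_le_eigenspace f hfW ν ⟨w, hw.1, rfl⟩, hw0⟩⟩

lemma Subrepresentation.spectrum_toRepresentation_subset {F H V : Type*} [Field F] [Monoid H]
    [AddCommGroup V] [Module F V] [FiniteDimensional F V] {ρ : Representation F H V}
    (E : Subrepresentation ρ) (g : H) :
    spectrum F (E.toRepresentation g) ⊆ spectrum F (ρ g) :=
  spectrum_restrict_subset (ρ g) fun _ hv => E.apply_mem_toSubmodule g hv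

namespace Representation

variable {F H V : Type*} [Field F] [Group H] [AddCommGroup V] [Module F V]

def HasSubmultiplicativeSpectrum (ρ : Representation F H V) : Prop :=
  ∀ a b : H, spectrum F (ρ (a * b)) ⊆ spectrum F (ρ a) * spectrum F (ρ b)

def scalarSubgroup (ρ : Representation F H V) : Subgroup H where
  carrier := {h | ρ h ∈ Set.range (algebraMap F (End F V))}
  one_mem' := ⟨1, by simp⟩
  mul_mem' := by
    rintro g h ⟨α, hα⟩ ⟨β, hβ⟩
    exact ⟨α * β, by simp [hα, hβ]⟩
  inv_mem' := by
    rintro h ⟨c, hc⟩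
    rcases eq_or_ne c 0 with rfl | hc0
    · have hunit : IsUnit (ρ h) := (ρ.asGroupHom h).isUnit
      rw [← hc, map_zero, isUnit_zero_iff] at hunit
      have := subsingleton_of_zero_eq_one hunit
      exact ⟨0, Subsingleton.elim _ _⟩
    refine ⟨c⁻¹, ?_⟩
    calc algebraMap F (End F V) c⁻¹ = ρ (h⁻¹ * h) * algebraMap F (End F V) c⁻¹ := by simp
      _ = ρ h⁻¹ := by rw [map_mul, ← hc, mul_assoc, ← map_mul, mul_inv_cancel₀ hc0, map_one,
            mul_one]

instance (ρ : Representation F H V) : ρ.scalarSubgroup.Normal where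
  conj_mem := by
    rintro n ⟨c, hc⟩ g
    refine ⟨c, ?_⟩
    rw [map_mul, map_mul, ← hc, ← Algebra.commutes, mul_assoc, ← map_mul, mul_inv_cancel, map_one,
      mul_one]

lemma HasSubmultiplicativeSpectrum.of_scalarSubgroup_eq_top {ρ : Representation F H V}
    (hρ : ρ.scalarSubgroup = ⊤) : ρ.HasSubmultiplicativeSpectrum := by
  intro a b
  nontriviality End F V
  obtain ⟨α, hα⟩ : a ∈ ρ.scalarSubgroup := hρ ▸ Subgroup.mem_top a
  obtain ⟨β, hβ⟩ : b ∈ ρ.scalarSubgroup := hρ ▸ Subgroup.mem_top b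
  rw [map_mul, ← hα, ← hβ, ← map_mul, spectrum.scalar_eq, spectrum.scalar_eq, spectrum.scalar_eq,
    Set.singleton_mul_singleton]

lemma exists_mul_eq_smul_mul {ρ : Representation F H V} {x g : H}
    (h : x * g * x⁻¹ * g⁻¹ ∈ ρ.scalarSubgroup) : ∃ c : F, ρ x * ρ g = c • (ρ g * ρ x) := by
  obtain ⟨c, hc⟩ := h
  refine ⟨c, ?_⟩
  rw [Algebra.smul_def, hc, ← map_mul, ← map_mul, ← map_mul]
  group

section IsAlgClosed

variable [IsAlgClosed F] [FiniteDimensional F V]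

lemma HasSubmultiplicativeSpectrum.of_commute {ρ : Representation F H V} {f : End F V}
    (hcomm : ∀ h, Commute f (ρ h)) (hf : f ∉ Set.range (algebraMap F (End F V)))
    (ih : ∀ E : Submodule F V, finrank F E < finrank F V →
      ∀ σ : Representation F H E, σ.HasSubmultiplicativeSpectrum) :
    ρ.HasSubmultiplicativeSpectrum := by
  intro a b μ hμ
  obtain ⟨ν, w, hw, hfw⟩ :=
    (hasEigenvalue_iff_mem_spectrum.mpr hμ).exists_hasEigenvector_of_commute (hcomm (a * b))
  let E : Subrepresentation ρ :=
    ⟨f.eigenspace ν, fun h _ hv => mapsTo_genEigenspace_of_comm (hcomm h) ν 1 hv⟩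
  have hE : finrank F E.toSubmodule < finrank F V := by
    refine Submodule.finrank_lt fun htop => hf ⟨ν, LinearMap.ext fun v => ?_⟩
    have hv : v ∈ E.toSubmodule := htop ▸ Submodule.mem_top
    rw [mem_eigenspace_iff.mp hv, Module.algebraMap_end_apply]
  have hμE : μ ∈ spectrum F (E.toRepresentation (a * b)) :=
    (hasEigenvalue_of_hasEigenvector (x := ⟨w, hfw.1⟩)
      ⟨mem_eigenspace_iff.mpr (Subtype.ext hw.apply_eq_smul), by simpa using hw.2⟩).mem_spectrum
  exact Set.mul_subset_mul (E.spectrum_toRepresentation_subset a)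
    (E.spectrum_toRepresentation_subset b) (ih _ hE _ a b hμE)

lemma setOf_pow_eq_one_subset_spectrum [Nontrivial V] {p : ℕ} (hp : p.Prime)
    {ρ : Representation F H V} (hexp : ∀ h : H, h ^ p = 1) {x g : H} {c : F} (hc : c ≠ 1)
    (hxg : ρ x * ρ g = c • (ρ g * ρ x)) : {ω : F | ω ^ p = 1} ⊆ spectrum F (ρ g) := by
  refine spectrum.setOf_pow_eq_one_subset_of_conj_eq_smul hp (by rw [← map_pow, hexp, map_one])
    (spectrum.nonempty_of_isAlgClosed_of_finiteDimensional F _) (u := ρ.asGroupHom x) hc ?_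
  change ρ x * ρ g * ρ x⁻¹ = c • ρ g
  rw [hxg, smul_mul_assoc, mul_assoc, ← map_mul, mul_inv_cancel, map_one, mul_one]

theorem hasSubmultiplicativeSpectrum_of_pow_prime_eq_one {p : ℕ} (hp : p.Prime) [Finite H]
    (hexp : ∀ h : H, h ^ p = 1) (ρ : Representation F H V) : ρ.HasSubmultiplicativeSpectrum := by
  induction hn : finrank F V using Nat.strong_induction_on generalizing H V with
  | _ n ih =>
  by_cases hS : ρ.scalarSubgroup = ⊤
  · exact .of_scalarSubgroup_eq_top hS
  have : Fact p.Prime := ⟨hp⟩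
  obtain ⟨x, hxS, hx⟩ := IsPGroup.exists_notMem_forall_commutator_mem
    (fun g => ⟨1, by rw [pow_one, hexp]⟩) hS
  have : Nontrivial V := by
    by_contra hV
    rw [not_nontrivial_iff_subsingleton] at hV
    exact hxS ⟨0, Subsingleton.elim _ _⟩
  have hroots : ∀ g, spectrum F (ρ g) ⊆ {μ : F | μ ^ p = 1} := fun g _ =>
    spectrum.pow_eq_one_of_pow_eq_one (by rw [← map_pow, hexp, map_one])
  have hne : ∀ g, (spectrum F (ρ g)).Nonempty := fun g =>
    spectrum.nonempty_of_isAlgClosed_of_finiteDimensional F _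
  intro a b
  obtain ⟨ca, hca⟩ := exists_mul_eq_smul_mul (ρ := ρ) (hx a)
  obtain ⟨cb, hcb⟩ := exists_mul_eq_smul_mul (ρ := ρ) (hx b)
  by_cases ha : ca ≠ 1
  · exact (hroots (a * b)).trans (Set.setOf_pow_eq_one_subset_mul
      (setOf_pow_eq_one_subset_spectrum hp hexp ha hca) (hne b) (hroots b) hp.ne_zero)
  by_cases hb : cb ≠ 1
  · rw [mul_comm]
    exact (hroots (a * b)).trans (Set.setOf_pow_eq_one_subset_mul
      (setOf_pow_eq_one_subset_spectrum hp hexp hb hcb) (hne a) (hroots a) hp.ne_zero)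
  obtain rfl := not_ne_iff.mp ha
  obtain rfl := not_ne_iff.mp hb
  rw [one_smul] at hca hcb
  let C : Subgroup H := Subgroup.comap ρ.asGroupHom (Subgroup.centralizer {ρ.asGroupHom x})
  have hmem : ∀ {g}, ρ x * ρ g = ρ g * ρ x → g ∈ C := fun hg =>
    Subgroup.mem_centralizer_singleton_iff.mpr (Units.ext hg.symm)
  have hcomm : ∀ h : C, Commute (ρ x) (ρ.comp C.subtype h) := fun h =>
    (congrArg Units.val (Subgroup.mem_centralizer_singleton_iff.mp h.2)).symm
  exact HasSubmultiplicativeSpectrum.of_commute (ρ := ρ.comp C.subtype) hcomm hxS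
    (fun E hE σ => ih _ (hn ▸ hE) (fun h => Subtype.ext (hexp h)) σ rfl) ⟨a, hmem hca⟩ ⟨b, hmem hcb⟩

end IsAlgClosed

end Representation

theorem stmt13_general {F : Type*} [Field F] [IsAlgClosed F]
    {G : Type*} [Group G] [Finite G] (p : ℕ) (hp : p.Prime)
    (hexp : ∀ g : G, g ^ p = 1) :
    PropertyShat F G := by
  intro K n ρ a b
  let e : Matrix (Fin n) (Fin n) F ≃ₐ[F] End F (Fin n → F) := Matrix.toLinAlgEquiv'
  have := Representation.hasSubmultiplicativeSpectrum_of_pow_prime_eq_one hp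
    (fun k : K => Subtype.ext (hexp k))
    ((e : Matrix (Fin n) (Fin n) F →* End F (Fin n → F)).comp ((Units.coeHom _).comp ρ)) a b
  simpa only [MonoidHom.comp_apply, Units.coeHom_apply, MonoidHom.coe_coe, AlgEquiv.spectrum_eq]
    using this

/-- Every finite group of exponent `p` (`p` prime) has property Ŝ: every
representation of every subgroup over an algebraically closed field of characteristic
zero has submultiplicative spectrum. -/
theorem stmt13 {F : Type*} [Field F] [IsAlgClosed F] [CharZero F]
    {G : Type*} [Group G] [Finite G] (p : ℕ) (hp : p.Prime)
    (hexp : ∀ g : G, g ^ p = 1) :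
    PropertyShat F G :=
  stmt13_general p hp hexp
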